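/- Let (E_n) be a sequence of nonnegative reals and (ĉ_n), (a_n) sequences with 0 < ĉ_n < 1 and a_n ≥ 0, satisfying E_{n+1} ≤ e^{2a_n}(ĉ_n + a_n)·E_n for all n. If ∑ a_n < ∞ and ∑ ln ĉ_n = −∞, then E_n → 0. -/

import Mathlib

/-!
Since `ĉ + a ≤ max ĉ (1/2) · (1 + 2a) ≤ max ĉ (1/2) · e^{2a}`, each step multiplies `E` by at most
`exp (4 aₙ + max (log ĉₙ) (-log 2))`. The `aₙ` contribute a bounded amount, and truncating the
nonpositive terms `log ĉₙ` at `-log 2` keeps their partial sums divergent to `-∞`: otherwise the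
truncated series would converge, so its terms would eventually be untruncated and `∑ log ĉₙ`
itself would converge.
-/

open Filter Real Topology

theorem tendsto_zero_of_le_exp_mul {E s : ℕ → ℝ} (hE : ∀ n, 0 ≤ E n)
    (hrec : ∀ n, E (n + 1) ≤ exp (s n) * E n)
    (hs : Tendsto (fun N => ∑ n ∈ Finset.range N, s n) atTop atBot) :
    Tendsto E atTop (𝓝 0) := by
  have hbound : ∀ N, E N ≤ E 0 * exp (∑ n ∈ Finset.range N, s n) := by
    intro N
    induction N with
    | zero => simp
    | succ N ih =>
      calc E (N + 1) ≤ exp (s N) * E N := hrec N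
        _ ≤ exp (s N) * (E 0 * exp (∑ n ∈ Finset.range N, s n)) := by gcongr
        _ = E 0 * exp (∑ n ∈ Finset.range (N + 1), s n) := by
          rw [Finset.sum_range_succ, exp_add]; ring
  refine squeeze_zero hE hbound ?_
  simpa using (tendsto_exp_atBot.comp hs).const_mul (E 0)

theorem tendsto_sum_range_max_neg_atBot {x : ℕ → ℝ} (hx : ∀ n, x n ≤ 0) {L : ℝ} (hL : 0 < L)
    (h : Tendsto (fun N => ∑ n ∈ Finset.range N, x n) atTop atBot) :
    Tendsto (fun N => ∑ n ∈ Finset.range N, max (x n) (-L)) atTop atBot := by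
  by_contra hne
  have hsummable : Summable fun n => max (x n) (-L) := by
    rw [← summable_neg_iff]
    by_contra hns
    rw [not_summable_iff_tendsto_nat_atTop_of_nonneg
      fun n => neg_nonneg.2 (max_le (hx n) (by linarith))] at hns
    simp only [Finset.sum_neg_distrib, tendsto_neg_atTop_iff] at hns
    exact hne hns
  have heq : (fun n => max (x n) (-L)) =ᶠ[cofinite] x := by
    rw [Nat.cofinite_eq_atTop]
    filter_upwards [hsummable.tendsto_atTop_zero.eventually (lt_mem_nhds (neg_lt_zero.2 hL))]
      with n hn
    exact max_eq_left (lt_max_iff.1 hn |>.resolve_right (lt_irrefl _)).le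
  exact not_tendsto_atBot_of_tendsto_nhds (hsummable.congr_cofinite heq).hasSum.tendsto_sum_nat h

theorem log_add_le_max_log_add {c a : ℝ} (hc : 0 < c) (ha : 0 ≤ a) :
    log (c + a) ≤ max (log c) (-log 2) + 2 * a := by
  have hfactor : ∀ m, 0 < m → c + a ≤ m * (1 + 2 * a) → log (c + a) ≤ log m + 2 * a :=
    fun m hm h =>
      calc log (c + a) ≤ log (m * (1 + 2 * a)) := log_le_log (by positivity) h
        _ = log m + log (1 + 2 * a) := log_mul hm.ne' (by positivity)
        _ ≤ log m + 2 * a := by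
          linarith [log_le_sub_one_of_pos (by positivity : 0 < 1 + 2 * a)]
  rcases le_total (1 / 2) c with hc2 | hc2
  · exact (hfactor c hc (by nlinarith)).trans (by gcongr; exact le_max_left _ _)
  · have h := hfactor (1 / 2) (by norm_num) (by linarith)
    rw [one_div, log_inv] at h
    exact h.trans (by gcongr; exact le_max_right _ _)

theorem stmt_9 (E chat a : ℕ → ℝ)
    (hE : ∀ n, 0 ≤ E n) (hchat : ∀ n, 0 < chat n ∧ chat n < 1) (ha : ∀ n, 0 ≤ a n)
    (hrec : ∀ n, E (n + 1) ≤ Real.exp (2 * a n) * (chat n + a n) * E n)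
    (hsum : Summable a)
    (hdiv : Tendsto (fun N => ∑ n ∈ Finset.range N, Real.log (chat n)) atTop atBot) :
    Tendsto E atTop (nhds 0) := by
  refine tendsto_zero_of_le_exp_mul (s := fun n => 4 * a n + max (log (chat n)) (-log 2))
    hE (fun n => ?_) ?_
  · have hpos : 0 < chat n + a n := by linarith [(hchat n).1, ha n]
    calc E (n + 1) ≤ exp (2 * a n) * (chat n + a n) * E n := hrec n
      _ = exp (2 * a n + log (chat n + a n)) * E n := by rw [exp_add, exp_log hpos]
      _ ≤ exp (4 * a n + max (log (chat n)) (-log 2)) * E n := by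
        refine mul_le_mul_of_nonneg_right (exp_le_exp.2 ?_) (hE n)
        linarith [log_add_le_max_log_add (hchat n).1 (ha n), ha n]
  · simp only [Finset.sum_add_distrib, ← Finset.mul_sum]
    exact tendsto_atBot_add_left_of_ge _ (4 * ∑' n, a n)
      (fun N => by gcongr; exact hsum.sum_le_tsum _ fun n _ => ha n)
      (tendsto_sum_range_max_neg_atBot (fun n => log_nonpos (hchat n).1.le (hchat n).2.le)
        (log_pos one_lt_two) hdiv)
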